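/- For two walks w, w' of B_{n,k} in the same conjugacy class, the height-to-min distributions satisfy ĥ_i(w) ≤ ĥ_{i+k}(w') for all i ≥ 0, where ĥ_i(w) is the number of down steps of w ending at height at most i above the minimum of w. -/

import Mathlib

/-!
Rotating `w` by `s` moves the down step at position `t` to position `t - s`. With `T = -k` the
total displacement of `w`, the rotated walk reaches height at most `w(t+1) - w(s)` after that step,
while its minimum is at least `min w + T - w(s)`: since `T ≤ 0`, wrapping once around only lowers
the walk. So the height above the minimum grows by at most `-T = k`, and `t ↦ t - s` injects the
down steps counted by `ĥᵢ(w)` into those counted by `ĥᵢ₊ₖ(w')`.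
-/

/-- Partial sum of the first `p` increments of a walk `w`. -/
def psum {m : ℕ} (w : Fin m → ℤ) (p : ℕ) : ℤ :=
  ∑ i ∈ Finset.univ.filter (fun i : Fin m => i.val < p), w i

/-- Cyclic shift of a walk by `s` positions. -/
def cyclicShift {m : ℕ} (s : ℕ) (w : Fin m → ℤ) : Fin m → ℤ :=
  fun i => w ⟨(i.val + s) % m, Nat.mod_lt _ i.pos⟩

/-- `w` belongs to `B_{n,k}`. -/
def IsBWalk (n k : ℕ) (w : Fin (2 * n + k) → ℤ) : Prop :=
  (∀ i, w i = 1 ∨ w i = -1) ∧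
  (Finset.univ.filter (fun i => w i = 1)).card = n ∧
  ∀ i : Fin (2 * n + k), i.val = 2 * n + k - 1 → w i = -1

/-- Minimum value of the walk `w` over all steps `0 ≤ p ≤ 2n+k`. -/
def minVal (n k : ℕ) (w : Fin (2 * n + k) → ℤ) : ℤ :=
  (Finset.range (2 * n + k + 1)).inf' (by simp) (psum w)

/-- `ĥᵢ(w)`: number of down steps of `w` ending at height at most `i` above the
minimum of `w` (height-to-min distribution). -/
def heightToMinCount (n k : ℕ) (w : Fin (2 * n + k) → ℤ) (i : ℤ) : ℕ :=
  (Finset.univ.filter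
    (fun t : Fin (2 * n + k) => w t = -1 ∧ psum w (t.val + 1) - minVal n k w ≤ i)).card

section Walk

variable {m : ℕ} (w : Fin m → ℤ)

lemma psum_zero : psum w 0 = 0 := by
  simp [psum]

lemma psum_succ {p : ℕ} (hp : p < m) : psum w (p + 1) = psum w p + w ⟨p, hp⟩ := by
  have hfilter : Finset.univ.filter (fun i : Fin m => i.val < p + 1)
      = insert ⟨p, hp⟩ (Finset.univ.filter (fun i : Fin m => i.val < p)) := by
    ext j
    simp only [Finset.mem_filter, Finset.mem_univ, true_and, Finset.mem_insert, Fin.ext_iff]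
    omega
  rw [psum, hfilter, Finset.sum_insert (by simp), add_comm, psum]

lemma psum_self : psum w m = ∑ i, w i := by
  rw [psum, Finset.filter_true_of_mem fun i _ => i.isLt]

lemma psum_rotate (c : Fin m) {p : ℕ} (hp : p ≤ m) :
    psum (fun i => w (i + c)) p =
      (if c + p ≤ m then psum w (c + p) else psum w (c + p - m) + psum w m) - psum w c := by
  induction p with
  | zero => simp [psum_zero]
  | succ p ih =>
    have hpm : p < m := by omega
    have hval := Fin.val_add_eq_ite (⟨p, hpm⟩ : Fin m) c
    dsimp only at hval
    rw [psum_succ _ hpm, ih hpm.le]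
    rcases lt_trichotomy (c + p) m with hlt | heq | hgt
    · rw [if_pos hlt.le, if_pos (by omega), show c + (p + 1) = (c + p) + 1 by omega,
        psum_succ w hlt,
        show (⟨p, hpm⟩ + c : Fin m) = ⟨c + p, hlt⟩ from
          Fin.ext (by simp only; split at hval <;> omega)]
      ring
    · rw [if_pos heq.le, if_neg (by omega), show c + (p + 1) - m = 0 + 1 by omega,
        psum_succ w (by omega), psum_zero, heq,
        show (⟨p, hpm⟩ + c : Fin m) = ⟨0, by omega⟩ from
          Fin.ext (by simp only; split at hval <;> omega)]
      ring
    · rw [if_neg (by omega), if_neg (by omega), show c + (p + 1) - m = (c + p - m) + 1 by omega,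
        psum_succ w (by omega : c + p - m < m),
        show (⟨p, hpm⟩ + c : Fin m) = ⟨c + p - m, by omega⟩ from
          Fin.ext (by simp only; split at hval <;> omega)]
      ring

variable {w}

lemma le_psum_rotate {μ : ℤ} (hμ : ∀ q ≤ m, μ ≤ psum w q) (htotal : psum w m ≤ 0)
    (c : Fin m) {p : ℕ} (hp : p ≤ m) :
    μ + psum w m - psum w c ≤ psum (fun i => w (i + c)) p := by
  rw [psum_rotate w c hp]
  split
  · linarith [hμ (c + p) ‹_›]
  · linarith [hμ (c + p - m) (by omega)]

lemma psum_rotate_sub_le [NeZero m] (htotal : psum w m ≤ 0) (c t : Fin m) :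
    psum (fun i => w (i + c)) ((t - c : Fin m) + 1) ≤ psum w (t + 1) - psum w c := by
  have hval := Fin.val_add_eq_ite (t - c) c
  rw [sub_add_cancel] at hval
  rw [psum_rotate w c (by omega)]
  split
  · rw [show (c : ℕ) + ((t - c : Fin m) + 1) = t + 1 by split at hval <;> omega]
  · rw [show (c : ℕ) + ((t - c : Fin m) + 1) - m = t + 1 by split at hval <;> omega]
    linarith

end Walk

lemma cyclicShift_eq_comp_add {m : ℕ} [NeZero m] (s : ℕ) (w : Fin m → ℤ) :
    cyclicShift s w = fun i => w (i + Fin.ofNat m s) := by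
  funext i
  simp only [cyclicShift]
  congr 1
  ext
  rw [Fin.val_add, Fin.val_ofNat, Nat.add_mod_mod]

lemma psum_total_of_isBWalk {n k : ℕ} {w : Fin (2 * n + k) → ℤ} (hw : IsBWalk n k w) :
    psum w (2 * n + k) = -k := by
  have hstep : ∀ i, w i = 2 * (if w i = 1 then 1 else 0) - 1 := fun i => by
    rcases hw.1 i with h | h <;> simp [h]
  rw [psum_self, Finset.sum_congr rfl fun i _ => hstep i, Finset.sum_sub_distrib,
    ← Finset.mul_sum, Finset.sum_boole, hw.2.1]
  simp

lemma minVal_le {n k : ℕ} (w : Fin (2 * n + k) → ℤ) {q : ℕ} (hq : q ≤ 2 * n + k) :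
    minVal n k w ≤ psum w q :=
  Finset.inf'_le _ (Finset.mem_range.mpr (by omega))

lemma le_minVal_rotate {n k : ℕ} {w : Fin (2 * n + k) → ℤ} (htotal : psum w (2 * n + k) ≤ 0)
    (c : Fin (2 * n + k)) :
    minVal n k w + psum w (2 * n + k) - psum w c ≤ minVal n k (fun i => w (i + c)) :=
  Finset.le_inf' _ _ fun p hp =>
    le_psum_rotate (fun q hq => minVal_le w hq) htotal c (by simp at hp; omega)

/-- For two walks of `B_{n,k}` in the same conjugacy class, the height-to-min
distributions satisfy `ĥᵢ(w) ≤ ĥ_{i+k}(w')` for all `i ≥ 0`. -/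
theorem heightToMinCount_le_cyclicShift (n k : ℕ) (hk : 1 ≤ k) (s : ℕ)
    (w : Fin (2 * n + k) → ℤ) (hw : IsBWalk n k w) :
    ∀ i : ℤ, 0 ≤ i →
      heightToMinCount n k w i ≤ heightToMinCount n k (cyclicShift s w) (i + k) := by
  intro i _
  have : NeZero (2 * n + k) := ⟨by omega⟩
  have htotal := psum_total_of_isBWalk hw
  rw [cyclicShift_eq_comp_add]
  apply Finset.card_le_card_of_injOn (· - Fin.ofNat _ s)
  · intro t ht
    simp only [Finset.coe_filter, Finset.mem_univ, true_and, Set.mem_ofPred_eq, sub_add_cancel]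
      at ht ⊢
    refine ⟨ht.1, ?_⟩
    have hpsum := psum_rotate_sub_le (w := w) (by omega) (Fin.ofNat _ s) t
    have hmin := le_minVal_rotate (w := w) (by omega) (Fin.ofNat _ s)
    linarith [ht.2]
  · exact fun a _ b _ hab => sub_left_injective hab
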